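/- arXiv:0902.3776 — 2 statements merged into one kernel-verified Lean document; each statement's English description precedes it below -/
import Mathlib

section
/- Suppose A is admissible with ⟨κ_A⟩_ℓ = 1, and B = φ_{U1}⋯φ_{Un} is obtained from A by fixing A at location ℓ (replacing W″_{ℓ-1}W_ℓW′_{ℓ+1} ∈ R by its complement). Then ⟨κ_B⟩_ℓ = 0. -/
/-- `P` is a piece for the presentation with defining words `R`: it occurs as a
subword of defining words in two essentially different ways. -/
def IsPiece {X : Type*} (R : Set (List X)) (P : List X) : Prop :=
  ∃ W₁ ∈ R, ∃ W₂ ∈ R, ∃ U₁ U₂ V₁ V₂ : List X,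
    W₁ = U₁ ++ P ++ U₂ ∧ W₂ = V₁ ++ P ++ V₂ ∧ (U₁ ≠ V₁ ∨ U₂ ≠ V₂)

/-- The piece-length `lp W`: the minimal number `k` such that `W` decomposes as a
concatenation of `k` pieces; `0` for the empty word, `⊤` if no decomposition exists. -/
noncomputable def pieceLength {X : Type*} (R : Set (List X)) (W : List X) : ℕ∞ :=
  sInf {n : ℕ∞ | ∃ l : List (List X),
    (∀ P ∈ l, IsPiece R P) ∧ l.flatten = W ∧ (l.length : ℕ∞) = n}

/-- The set of defining words of a presentation given by a set of relations. -/
def defWords {X : Type*} (Rel : Set (List X × List X)) : Set (List X) :=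
  {W | ∃ p ∈ Rel, W = p.1 ∨ W = p.2}

/-- The `K₃²` condition: (a) the two sides of each relation start with different
generators and end with different generators; (b) every defining word has
piece-length at least 3; (c) the words of any two distinct defining relations are
pairwise distinct (and the two sides of each relation are distinct). -/
def K32 {X : Type*} (Rel : Set (List X × List X)) : Prop :=
  (∀ p ∈ Rel, p.1.head? ≠ p.2.head? ∧ p.1.getLast? ≠ p.2.getLast?) ∧
  (∀ W ∈ defWords Rel, 3 ≤ pieceLength (defWords Rel) W) ∧
  (∀ p ∈ Rel, p.1 ≠ p.2) ∧
  (∀ p ∈ Rel, ∀ q ∈ Rel, p ≠ q →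
    p.1 ≠ q.1 ∧ p.1 ≠ q.2 ∧ p.2 ≠ q.1 ∧ p.2 ≠ q.2)

/-- The standard padding map `δ_X` on pairs of words. -/
def pad {X : Type*} : List X → List X → List (Option X × Option X)
  | [], [] => []
  | [], y :: ys => (none, some y) :: pad [] ys
  | x :: xs, [] => (some x, none) :: pad xs []
  | x :: xs, y :: ys => (some x, some y) :: pad xs ys
  termination_by a b => a.length + b.length

/-- The relators of the co-presented group of the semigroup presentation `Rel`. -/
def relators {X : Type*} (Rel : Set (List X × List X)) : Set (FreeGroup X) :=
  {g | ∃ p ∈ Rel, g = (p.1.map FreeGroup.of).prod * ((p.2.map FreeGroup.of).prod)⁻¹}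

/-- Evaluation of a positive word in the co-presented group. -/
def toG {X : Type*} (Rel : Set (List X × List X)) (w : List X) :
    PresentedGroup (relators Rel) :=
  (w.map PresentedGroup.of).prod

/-- Equality in the semigroup presented by `Rel`: the congruence on the free monoid
generated by the defining relations. -/
def SGRel {X : Type*} (Rel : Set (List X × List X)) (w u : List X) : Prop :=
  conGen (fun a b : FreeMonoid X => ∃ p ∈ Rel,
      a = FreeMonoid.ofList p.1 ∧ b = FreeMonoid.ofList p.2)
    (FreeMonoid.ofList w) (FreeMonoid.ofList u)

/-- The word metric on the co-presented group with respect to `X ∪ X⁻¹`;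
its restriction to (the image of) the semigroup is the induced metric. -/
noncomputable def gdist {X : Type*} (Rel : Set (List X × List X))
    (g h : PresentedGroup (relators Rel)) : ℕ∞ :=
  sInf {n : ℕ∞ | ∃ l : List (X × Bool),
    (l.map (fun b => if b.2 then (PresentedGroup.of b.1 : PresentedGroup (relators Rel))
      else (PresentedGroup.of b.1)⁻¹)).prod = g⁻¹ * h ∧ (l.length : ℕ∞) = n}

/-- `W` and `U` are `k`-fellow-travellers with respect to the induced metric. -/
noncomputable def KFT {X : Type*} (Rel : Set (List X × List X)) (k : ℕ)
    (W U : List X) : Prop :=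
  ∀ n : ℕ, gdist Rel (toG Rel (W.take n)) (toG Rel (U.take n)) ≤ (k : ℕ∞)

/-- `L` is an automatic structure for the semigroup presented by `Rel`. -/
def IsAutomaticStructure {X : Type*} (Rel : Set (List X × List X))
    (L : Language X) : Prop :=
  L.IsRegular ∧ (∀ u : List X, ∃ w ∈ L, SGRel Rel w u) ∧
  ∀ x : Option X, Language.IsRegular
    {p : List (Option X × Option X) | ∃ W ∈ L, ∃ U ∈ L,
      SGRel Rel (W ++ x.toList) U ∧ p = pad W U}

/-- The semigroup presented by `Rel` is automatic. -/
def IsAutomatic {X : Type*} (Rel : Set (List X × List X)) : Prop :=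
  ∃ L : Language X, IsAutomaticStructure Rel L

/-- `𝓑`: the set of (nonempty) subwords of defining words. -/
def Bset {X : Type*} (Rel : Set (List X × List X)) : Set (List X) :=
  {W | W ≠ [] ∧ ∃ D ∈ defWords Rel, W <:+: D}

/-- A word over the alphabet `Φ = {φ_W : W ∈ 𝓑}`, recorded as its list of blocks. -/
def IsPhiWord {X : Type*} (Rel : Set (List X × List X)) (A : List (List X)) : Prop :=
  ∀ W ∈ A, W ∈ Bset Rel

/-- `A = φ_{W₁}⋯φ_{Wₙ}` is admissible: no product of consecutive blocks lies in `𝓑`. -/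
def Admissible {X : Type*} (Rel : Set (List X × List X)) (A : List (List X)) : Prop :=
  List.Chain' (fun u v => (u ++ v) ∉ Bset Rel) A

/-- The block preceding position `i` (`0`-based), with `W₀ = ε`. -/
def prevBlock {X : Type*} (A : List (List X)) (i : ℕ) : List X :=
  if i = 0 then [] else A.getD (i - 1) []

/-- The `i`-th (0-based) coordinate of the auxiliary vector `κ_A` equals `1`:
there are decompositions `W_{i-1} = q ++ p` and `W_{i+1} = s ++ t` with
`p ++ W_i ++ s` a defining word whose piece-length exceeds that of its complement. -/
def KappaOne {X : Type*} (Rel : Set (List X × List X)) (A : List (List X)) (i : ℕ) : Prop :=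
  ∃ p s q t : List X,
    prevBlock A i = q ++ p ∧ A.getD (i + 1) [] = s ++ t ∧
    (p ++ A.getD i [] ++ s) ∈ defWords Rel ∧
    ∃ C : List X, ((p ++ A.getD i [] ++ s, C) ∈ Rel ∨ (C, p ++ A.getD i [] ++ s) ∈ Rel) ∧
      pieceLength (defWords Rel) C < pieceLength (defWords Rel) (p ++ A.getD i [] ++ s)

/-- `A` is efficient: admissible and `κ_A` is the zero vector. -/
def Efficient {X : Type*} (Rel : Set (List X × List X)) (A : List (List X)) : Prop :=
  Admissible Rel A ∧ ∀ i < A.length, ¬ KappaOne Rel A i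

/-- Condition (†): each defining relation `L = R` satisfies `lp L + lp R ≥ 7`. -/
def Dagger {X : Type*} (Rel : Set (List X × List X)) : Prop :=
  ∀ p ∈ Rel, 7 ≤ pieceLength (defWords Rel) p.1 + pieceLength (defWords Rel) p.2

/-- The Piefer order: `A ≼ B` iff `κ_A = κ_B` or `κ_A` precedes `κ_B` in shortlex. -/
def PieferLe {X : Type*} (Rel : Set (List X × List X)) (A B : List (List X)) : Prop :=
  A.length < B.length ∨ (A.length = B.length ∧
    ((∀ i < B.length, (KappaOne Rel A i ↔ KappaOne Rel B i)) ∨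
      ∃ j < B.length, (∀ i < j, (KappaOne Rel A i ↔ KappaOne Rel B i)) ∧
        ¬ KappaOne Rel A j ∧ KappaOne Rel B j))

/-- `A` is left-greedy: no block extended by the first letter of the next block is in `𝓑`. -/
def LeftGreedy {X : Type*} (Rel : Set (List X × List X)) (A : List (List X)) : Prop :=
  List.Chain' (fun u v => ∀ x ∈ v.head?, (u ++ [x]) ∉ Bset Rel) A

/-- The word metric on the co-presented group with respect to the generating set
`𝓑 ∪ 𝓑⁻¹`; its restriction to the semigroup is the induced metric `d_Φ`. -/
noncomputable def dPhi {X : Type*} (Rel : Set (List X × List X))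
    (g h : PresentedGroup (relators Rel)) : ℕ∞ :=
  sInf {n : ℕ∞ | ∃ l : List (List X × Bool), (∀ b ∈ l, b.1 ∈ Bset Rel) ∧
    (l.map (fun b => if b.2 then toG Rel b.1 else (toG Rel b.1)⁻¹)).prod = g⁻¹ * h ∧
    (l.length : ℕ∞) = n}


/-- A word is a piece as soon as it occurs in two defining words in essentially
different ways; a piece has piece-length at most `1`. -/
lemma pieceLength_le_one_of_isPiece {X : Type*} (R : Set (List X)) (P : List X)
    (h : IsPiece R P) : pieceLength R P ≤ 1 := by
  apply sInf_le
  exact ⟨[P], by simpa using h, by simp, by simp⟩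

/-- If `B` is obtained from an admissible `A` with `⟨κ_A⟩ᵢ = 1` by fixing `A` at
location `i` (replacing the defining word `V = p ++ W_i ++ s` spanning positions
`i-1, i, i+1` by its complement `C`), then `⟨κ_B⟩ᵢ = 0`. -/
theorem kappa_zero_after_fixing {X : Type*} (Rel : Set (List X × List X))
    (hK : K32 Rel) (hD : Dagger Rel)
    (A : List (List X)) (hA : IsPhiWord Rel A) (hAdm : Admissible Rel A)
    (i : ℕ) (hin : i < A.length)
    (p s q t C : List X)
    (hprev : prevBlock A i = q ++ p) (hnext : A.getD (i + 1) [] = s ++ t)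
    (hdef : (p ++ A.getD i [] ++ s) ∈ defWords Rel)
    (hcomp : (p ++ A.getD i [] ++ s, C) ∈ Rel ∨ (C, p ++ A.getD i [] ++ s) ∈ Rel)
    (hlt : pieceLength (defWords Rel) C <
      pieceLength (defWords Rel) (p ++ A.getD i [] ++ s))
    (B : List (List X)) (hB : B = ((A.set (i - 1) q).set i C).set (i + 1) t) :
    ¬ KappaOne Rel B i := by
  intro hK1
  obtain ⟨p', s', q', t', hprev', hnext', hdef', C', hC', hlt'⟩ := hK1
  have hBi : B.getD i [] = C := by
    subst hB
    rw [List.getD_eq_getElem?_getD]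
    rw [List.getElem?_set_ne (by omega)]
    rw [List.getElem?_set_self' ]
    simp [hin]
  rw [hBi] at hdef' hC' hlt'
  set V := p ++ A.getD i [] ++ s with hV
  have hCdef : C ∈ defWords Rel := by
    rcases hcomp with h | h
    · exact ⟨_, h, Or.inr rfl⟩
    · exact ⟨_, h, Or.inl rfl⟩
  by_cases hps : p' = [] ∧ s' = []
  · obtain ⟨hp', hs'⟩ := hps
    subst hp' hs'
    simp only [List.nil_append, List.append_nil] at hdef' hC' hlt'
    rcases hcomp with h1 | h1 <;> rcases hC' with h2 | h2
    · by_cases heq : (V, C) = (C, C')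
      · obtain ⟨hVC, _⟩ := Prod.mk.injEq .. ▸ heq
        rw [hVC] at hlt
        exact absurd hlt (lt_irrefl _)
      · exact absurd rfl (hK.2.2.2 _ h1 _ h2 heq).2.2.1
    · by_cases heq : (V, C) = (C', C)
      · have hVC' : V = C' := congrArg Prod.fst heq
        rw [hVC'] at hlt
        exact absurd (hlt.trans hlt') (lt_irrefl _)
      · exact absurd rfl (hK.2.2.2 _ h1 _ h2 heq).2.2.2
    · by_cases heq : (C, V) = (C, C')
      · have hVC' : V = C' := congrArg Prod.snd heq
        rw [hVC'] at hlt
        exact absurd (hlt.trans hlt') (lt_irrefl _)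
      · exact absurd rfl (hK.2.2.2 _ h1 _ h2 heq).1
    · by_cases heq : (C, V) = (C', C)
      · have hVC : V = C := congrArg Prod.snd heq
        rw [hVC] at hlt
        exact absurd hlt (lt_irrefl _)
      · exact absurd rfl (hK.2.2.2 _ h1 _ h2 heq).2.1
  · have hpiece : IsPiece (defWords Rel) C := by
      refine ⟨C, hCdef, p' ++ C ++ s', hdef', [], [], p', s', by simp, rfl, ?_⟩
      rcases not_and_or.mp hps with h | h
      · exact Or.inl (fun he => h he.symm)
      · exact Or.inr (fun he => h he.symm)
    have h3 := hK.2.1 C hCdef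
    have h1 := pieceLength_le_one_of_isPiece (defWords Rel) C hpiece
    have : (3 : ℕ∞) ≤ 1 := le_trans h3 h1
    norm_num at this
end

section
/- If B is obtained from an admissible A by fixing A at location ℓ, then |A| = |B|, π(A) = π(B), and A and B are 1-fellow-travellers with respect to the induced metric d_Φ. -/
/-! Fixing replaces the blocks `q ++ p, W, s ++ t` at positions `i - 1, i, i + 1` by
`q, C, t`, where `C` is the complement of the defining word `p ++ W ++ s`. So the two
flattened words differ by one application of a defining relation, and their prefixes of
`j` blocks agree in the group except at `j = i`, where they differ by `p`, and at
`j = i + 1`, where (using `C = p W s` in the group) they differ by `s`. Both are subwords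
of a defining word, hence letters of `Φ` (or empty), which gives distance at most 1. -/

section Presentation

variable {X : Type*} {Rel : Set (List X × List X)}

variable (Rel) in
theorem toG_append (u v : List X) : toG Rel (u ++ v) = toG Rel u * toG Rel v := by
  simp [toG]

theorem toG_eq_of_mem {u v : List X} (h : (u, v) ∈ Rel) : toG Rel u = toG Rel v := by
  have hmk (w : List X) :
      toG Rel w = PresentedGroup.mk (relators Rel) (w.map FreeGroup.of).prod := by
    rw [map_list_prod, List.map_map]; rfl
  rw [hmk, hmk, ← mul_inv_eq_one, ← map_inv, ← map_mul]
  exact (QuotientGroup.eq_one_iff _).mpr (Subgroup.subset_normalClosure ⟨(u, v), h, rfl⟩)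

variable (Rel) in
theorem SGRel.refl (u : List X) : SGRel Rel u u :=
  ConGen.Rel.refl _

theorem SGRel.of_mem {u v : List X} (h : (u, v) ∈ Rel) : SGRel Rel u v :=
  ConGen.Rel.of _ _ ⟨_, h, rfl, rfl⟩

theorem SGRel.symm {u v : List X} (h : SGRel Rel u v) : SGRel Rel v u :=
  ConGen.Rel.symm h

theorem SGRel.append {u v u' v' : List X} (h : SGRel Rel u v) (h' : SGRel Rel u' v') :
    SGRel Rel (u ++ u') (v ++ v') := by
  unfold SGRel at *
  rw [FreeMonoid.ofList_append, FreeMonoid.ofList_append]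
  exact ConGen.Rel.mul h h'

variable (Rel) in
theorem dPhi_self (g : PresentedGroup (relators Rel)) : dPhi Rel g g = 0 :=
  nonpos_iff_eq_zero.mp (sInf_le ⟨[], by simp, by simp, rfl⟩)

theorem dPhi_mul_toG_le_one (g : PresentedGroup (relators Rel)) {u D : List X}
    (hD : D ∈ defWords Rel) (hu : u <:+: D) : dPhi Rel g (g * toG Rel u) ≤ 1 := by
  by_cases hu₀ : u = []
  · simp [hu₀, toG, dPhi_self Rel]
  · exact sInf_le ⟨[(u, true)], by simpa using ⟨hu₀, D, hD, hu⟩, by simp, by simp⟩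

theorem dPhi_mul_toG_le_one' (g : PresentedGroup (relators Rel)) {u D : List X}
    (hD : D ∈ defWords Rel) (hu : u <:+: D) : dPhi Rel (g * toG Rel u) g ≤ 1 := by
  by_cases hu₀ : u = []
  · simp [hu₀, toG, dPhi_self Rel]
  · exact sInf_le
      ⟨[(u, false)], by simpa using ⟨hu₀, D, hD, hu⟩, by simp [mul_assoc], by simp⟩

theorem toG_flatten_take_eq_of_le {A B : List (List X)} {n j : ℕ}
    (h : toG Rel (A.take n).flatten = toG Rel (B.take n).flatten) (hdrop : A.drop n = B.drop n)
    (hj : n ≤ j) : toG Rel (A.take j).flatten = toG Rel (B.take j).flatten := by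
  obtain ⟨k, rfl⟩ := Nat.exists_eq_add_of_le hj
  rw [List.take_add, List.take_add, List.flatten_append, List.flatten_append, toG_append,
    toG_append, h, hdrop]

theorem SGRel.flatten_of_take_of_drop {A B : List (List X)} {n : ℕ}
    (h : SGRel Rel (A.take n).flatten (B.take n).flatten) (hdrop : A.drop n = B.drop n) :
    SGRel Rel A.flatten B.flatten := by
  rw [← List.take_append_drop n A, ← List.take_append_drop n B, List.flatten_append,
    List.flatten_append, hdrop]
  exact h.append (SGRel.refl Rel _)

end Presentation

theorem List.flatten_take_add_one {α : Type*} (L : List (List α)) (j : ℕ) :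
    (L.take (j + 1)).flatten = (L.take j).flatten ++ L.getD j [] := by
  rw [List.take_add_one, List.flatten_append, List.getD_eq_getElem?_getD]
  cases L[j]? <;> simp

section Fixing

variable {X : Type*} (A : List (List X)) (i : ℕ) (q C t : List X)

-- For `i = 0` the truncated `i - 1` equals `i`, so the write of `q` is overwritten by `C`.
def fixBlocks : List (List X) :=
  ((A.set (i - 1) q).set i C).set (i + 1) t

@[simp]
theorem length_fixBlocks : (fixBlocks A i q C t).length = A.length := by
  simp [fixBlocks]

theorem take_fixBlocks_of_le {j : ℕ} (hj : j ≤ i - 1) :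
    (fixBlocks A i q C t).take j = A.take j := by
  rw [fixBlocks, List.take_set, List.take_set, List.take_set, List.set_eq_of_length_le,
    List.set_eq_of_length_le, List.set_eq_of_length_le] <;>
    · simp only [List.length_take, List.length_set]; omega

theorem drop_fixBlocks : (fixBlocks A i q C t).drop (i + 2) = A.drop (i + 2) := by
  rw [fixBlocks, List.drop_set, if_pos (by omega), List.drop_set, if_pos (by omega),
    List.drop_set, if_pos (by omega)]

theorem getD_fixBlocks_sub_one (hi : 0 < i) (hin : i < A.length) :
    (fixBlocks A i q C t).getD (i - 1) [] = q := by
  rw [fixBlocks, List.getD_eq_getElem?_getD, List.getElem?_set_ne (by omega),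
    List.getElem?_set_ne (by omega), List.getElem?_set_self (by omega)]
  rfl

theorem getD_fixBlocks_self (hin : i < A.length) : (fixBlocks A i q C t).getD i [] = C := by
  rw [fixBlocks, List.getD_eq_getElem?_getD, List.getElem?_set_ne (by omega),
    List.getElem?_set_self (by simpa using hin)]
  rfl

theorem getD_fixBlocks_add_one {s : List X} (hnext : A.getD (i + 1) [] = s ++ t) :
    (fixBlocks A i q C t).getD (i + 1) [] = t := by
  rw [fixBlocks, List.getD_eq_getElem?_getD]
  rcases Nat.lt_or_ge (i + 1) A.length with h | h
  · rw [List.getElem?_set_self (by simpa using h)]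
    rfl
  · rw [List.getD_eq_getElem?_getD, List.getElem?_eq_none h] at hnext
    rw [List.getElem?_eq_none (by simpa using h), (List.append_eq_nil_iff.mp hnext.symm).2]
    rfl

variable {A i q C t} {p s : List X}

theorem flatten_take_fixBlocks (hprev : prevBlock A i = q ++ p) (hin : i < A.length) :
    (A.take i).flatten = ((fixBlocks A i q C t).take i).flatten ++ p := by
  rcases Nat.eq_zero_or_pos i with rfl | hi
  · rw [prevBlock, if_pos rfl, eq_comm, List.append_eq_nil_iff] at hprev
    simp [hprev.2]
  · obtain ⟨k, rfl⟩ := Nat.exists_eq_add_of_le' hi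
    have hq := getD_fixBlocks_sub_one A (k + 1) q C t hi hin
    rw [prevBlock, if_neg (by omega)] at hprev
    rw [Nat.add_sub_cancel] at hprev hq
    rw [List.flatten_take_add_one, List.flatten_take_add_one, hprev, hq,
      take_fixBlocks_of_le A (k + 1) q C t (by omega), List.append_assoc]

theorem flatten_take_add_one_fixBlocks (hprev : prevBlock A i = q ++ p) (hin : i < A.length) :
    (A.take (i + 1)).flatten = ((fixBlocks A i q C t).take i).flatten ++ p ++ A.getD i [] ∧
    ((fixBlocks A i q C t).take (i + 1)).flatten =
      ((fixBlocks A i q C t).take i).flatten ++ C := by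
  rw [List.flatten_take_add_one, List.flatten_take_add_one, flatten_take_fixBlocks hprev hin,
    getD_fixBlocks_self A i q C t hin]
  exact ⟨rfl, rfl⟩

theorem flatten_take_add_two_fixBlocks (hprev : prevBlock A i = q ++ p) (hin : i < A.length)
    (hnext : A.getD (i + 1) [] = s ++ t) :
    (A.take (i + 2)).flatten =
      ((fixBlocks A i q C t).take i).flatten ++ (p ++ A.getD i [] ++ s) ++ t ∧
    ((fixBlocks A i q C t).take (i + 2)).flatten =
      ((fixBlocks A i q C t).take i).flatten ++ C ++ t := by
  obtain ⟨hA, hB⟩ := flatten_take_add_one_fixBlocks (C := C) (t := t) hprev hin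
  rw [List.flatten_take_add_one A (i + 1), List.flatten_take_add_one _ (i + 1), hA, hB, hnext,
    getD_fixBlocks_add_one A i q C t hnext]
  simp only [List.append_assoc, and_true]

theorem sgRel_flatten_fixBlocks {Rel : Set (List X × List X)}
    (hprev : prevBlock A i = q ++ p) (hin : i < A.length) (hnext : A.getD (i + 1) [] = s ++ t)
    (hcomp : (p ++ A.getD i [] ++ s, C) ∈ Rel ∨ (C, p ++ A.getD i [] ++ s) ∈ Rel) :
    SGRel Rel A.flatten (fixBlocks A i q C t).flatten := by
  have hW : SGRel Rel (p ++ A.getD i [] ++ s) C :=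
    hcomp.elim SGRel.of_mem fun h => (SGRel.of_mem h).symm
  obtain ⟨hA, hB⟩ := flatten_take_add_two_fixBlocks (C := C) hprev hin hnext
  refine SGRel.flatten_of_take_of_drop ?_ (drop_fixBlocks A i q C t).symm
  rw [hA, hB]
  exact ((SGRel.refl Rel _).append hW).append (SGRel.refl Rel t)

theorem dPhi_toG_flatten_take_fixBlocks_le_one {Rel : Set (List X × List X)}
    (hprev : prevBlock A i = q ++ p) (hin : i < A.length) (hnext : A.getD (i + 1) [] = s ++ t)
    (hdef : (p ++ A.getD i [] ++ s) ∈ defWords Rel)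
    (hcomp : (p ++ A.getD i [] ++ s, C) ∈ Rel ∨ (C, p ++ A.getD i [] ++ s) ∈ Rel) (j : ℕ) :
    dPhi Rel (toG Rel (A.take j).flatten)
      (toG Rel ((fixBlocks A i q C t).take j).flatten) ≤ 1 := by
  have hW : toG Rel (p ++ A.getD i [] ++ s) = toG Rel C :=
    hcomp.elim toG_eq_of_mem fun h => (toG_eq_of_mem h).symm
  obtain ⟨hA₁, hB₁⟩ := flatten_take_add_one_fixBlocks (C := C) (t := t) hprev hin
  obtain ⟨hA₂, hB₂⟩ := flatten_take_add_two_fixBlocks (C := C) hprev hin hnext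
  obtain hj | rfl | rfl | hj := (by omega : j < i ∨ i = j ∨ i + 1 = j ∨ i + 2 ≤ j)
  · rw [take_fixBlocks_of_le A i q C t (by omega), dPhi_self]
    exact zero_le_one
  · rw [flatten_take_fixBlocks hprev hin, toG_append]
    exact dPhi_mul_toG_le_one' _ hdef ⟨[], A.getD i [] ++ s, by simp⟩
  · have hB : toG Rel ((fixBlocks A i q C t).take (i + 1)).flatten =
        toG Rel (A.take (i + 1)).flatten * toG Rel s := by
      simp only [hA₁, hB₁, toG_append, ← hW, mul_assoc]
    rw [hB]
    exact dPhi_mul_toG_le_one _ hdef ⟨p ++ A.getD i [], [], by simp⟩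
  · have h₂ : toG Rel (A.take (i + 2)).flatten =
        toG Rel ((fixBlocks A i q C t).take (i + 2)).flatten := by
      rw [hA₂, hB₂, toG_append Rel _ t, toG_append Rel _ t, toG_append, toG_append Rel _ C, hW]
    rw [toG_flatten_take_eq_of_le h₂ (drop_fixBlocks A i q C t).symm hj, dPhi_self]
    exact zero_le_one

end Fixing

theorem fixing_preserves_element_and_fellow_travels_general {X : Type*}
    (Rel : Set (List X × List X)) (A : List (List X)) (i : ℕ) (hin : i < A.length)
    (p s q t C : List X)
    (hprev : prevBlock A i = q ++ p) (hnext : A.getD (i + 1) [] = s ++ t)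
    (hdef : (p ++ A.getD i [] ++ s) ∈ defWords Rel)
    (hcomp : (p ++ A.getD i [] ++ s, C) ∈ Rel ∨ (C, p ++ A.getD i [] ++ s) ∈ Rel)
    (B : List (List X)) (hB : B = ((A.set (i - 1) q).set i C).set (i + 1) t) :
    A.length = B.length ∧
    SGRel Rel A.flatten B.flatten ∧
    (∀ j : ℕ, dPhi Rel (toG Rel (A.take j).flatten) (toG Rel (B.take j).flatten) ≤ 1) := by
  obtain rfl : B = fixBlocks A i q C t := hB
  exact ⟨(length_fixBlocks A i q C t).symm, sgRel_flatten_fixBlocks hprev hin hnext hcomp,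
    dPhi_toG_flatten_take_fixBlocks_le_one hprev hin hnext hdef hcomp⟩

/-- If `B` is obtained from an admissible `A` by fixing `A` at location `i`, then
`|A| = |B|`, `π(A) = π(B)` in `S`, and `A` and `B` are `1`-fellow-travellers with
respect to the induced metric `d_Φ`. -/
theorem fixing_preserves_element_and_fellow_travels {X : Type*}
    (Rel : Set (List X × List X)) (hK : K32 Rel) (hD : Dagger Rel)
    (A : List (List X)) (hA : IsPhiWord Rel A) (hAdm : Admissible Rel A)
    (i : ℕ) (hin : i < A.length)
    (p s q t C : List X)
    (hprev : prevBlock A i = q ++ p) (hnext : A.getD (i + 1) [] = s ++ t)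
    (hdef : (p ++ A.getD i [] ++ s) ∈ defWords Rel)
    (hcomp : (p ++ A.getD i [] ++ s, C) ∈ Rel ∨ (C, p ++ A.getD i [] ++ s) ∈ Rel)
    (hlt : pieceLength (defWords Rel) C <
      pieceLength (defWords Rel) (p ++ A.getD i [] ++ s))
    (B : List (List X)) (hB : B = ((A.set (i - 1) q).set i C).set (i + 1) t) :
    A.length = B.length ∧
    SGRel Rel A.flatten B.flatten ∧
    (∀ j : ℕ, dPhi Rel (toG Rel (A.take j).flatten) (toG Rel (B.take j).flatten) ≤ 1) :=
  fixing_preserves_element_and_fellow_travels_general Rel A i hin p s q t C hprev hnext hdef hcomp B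
    hB
end
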